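/- arXiv:2002.09015 — 2 statements merged into one kernel-verified Lean document; each statement's English description precedes it below -/
import Mathlib

section
/- Let H = ℓ²(ℕ) and let S denote the unilateral right shift on H. For every k ≥ 0, let P_k = ∑_{i<k} e_{ii} be the projection onto the span of the first k basis vectors and P_k^⊥ = 1 - P_k. Then the 2×2 operator matrix u_k = [[P_k ⊗ 1, S^k ⊗ (S^k)*], [(S^k)* ⊗ S^k, 1 ⊗ P_k]] acting on (H ⊗ H) ⊕ (H ⊗ H) is a self-adjoint unitary. -/
open scoped InnerProductSpace


open ContinuousLinearMap in
/-- Let `H = ℓ²(ℕ)` (presented by a Hilbert basis `ξ` indexed by `ℕ`), let `S` be the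
unilateral right shift (`S ξ_n = ξ_{n+1}`), and let `P_k = 1 - Sᵏ(Sᵏ)*` be the projection
onto the span of the first `k` basis vectors.  Given the spatial tensor product
`τ : B(H) × B(H) → B(H ⊗ H)` (a bilinear, multiplicative, star-preserving, unital map),
the 2×2 operator matrix
`u_k = [[P_k ⊗ 1, Sᵏ ⊗ (Sᵏ)*], [(Sᵏ)* ⊗ Sᵏ, 1 ⊗ P_k]]`
acting on `(H ⊗ H) ⊕ (H ⊗ H)` is a self-adjoint unitary. -/
theorem uk_selfAdjoint_unitary
    {H : Type*} [NormedAddCommGroup H] [InnerProductSpace ℂ H] [CompleteSpace H]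
    (ξ : HilbertBasis ℕ ℂ H) (S : H →L[ℂ] H) (hS : ∀ n, S (ξ n) = ξ (n + 1))
    {B : Type*} [Ring B] [StarRing B]
    (τ : (H →L[ℂ] H) → (H →L[ℂ] H) → B)
    (hτ_one : τ 1 1 = 1)
    (hτ_addl : ∀ a b c, τ (a + b) c = τ a c + τ b c)
    (hτ_addr : ∀ a b c, τ a (b + c) = τ a b + τ a c)
    (hτ_mul : ∀ a b c d, τ a c * τ b d = τ (a * b) (c * d))
    (hτ_star : ∀ a b, star (τ a b) = τ (star a) (star b))
    (k : ℕ) :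
    letI P : H →L[ℂ] H := 1 - S ^ k * star (S ^ k)
    letI u : Matrix (Fin 2) (Fin 2) B :=
      !![τ P 1, τ (S ^ k) (star (S ^ k));
         τ (star (S ^ k)) (S ^ k), τ 1 P]
    IsSelfAdjoint u ∧ u ∈ unitary (Matrix (Fin 2) (Fin 2) B) := by
  -- elements of H are determined by inner products against the basis
  have hext : ∀ x y : H, (∀ i, ⟪ξ i, x⟫_ℂ = ⟪ξ i, y⟫_ℂ) → x = y := by
    intro x y h
    apply ξ.repr.injective
    ext i
    simpa [ξ.repr_apply_apply] using h i
  have horth := ξ.orthonormal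
  rw [orthonormal_iff_ite] at horth
  -- `S` is an isometry
  have hiso : star S * S = 1 := by
    apply ContinuousLinearMap.ext_on
      (Submodule.dense_iff_topologicalClosure_eq_top.mpr ξ.dense_span)
    rintro _ ⟨n, rfl⟩
    apply hext
    intro m
    rw [ContinuousLinearMap.mul_apply, ContinuousLinearMap.star_eq_adjoint,
      ContinuousLinearMap.adjoint_inner_right, hS, hS, ContinuousLinearMap.one_apply,
      horth, horth]
    simp
  have hTT : star (S ^ k) * S ^ k = 1 := by
    induction k with
    | zero => simp
    | succ n ih =>
        rw [pow_succ, star_mul, mul_assoc, ← mul_assoc (star (S ^ n)), ih, one_mul, hiso]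
  set T := S ^ k with hT
  set P : H →L[ℂ] H := 1 - T * star T with hPdef
  set u : Matrix (Fin 2) (Fin 2) B :=
    !![τ P 1, τ T (star T); τ (star T) T, τ 1 P] with hu
  have hτ0l : ∀ a, τ 0 a = 0 := by
    intro a
    have := hτ_addl 0 0 a
    rw [add_zero] at this
    exact right_eq_add.mp this
  have hτ0r : ∀ a, τ a 0 = 0 := by
    intro a
    have := hτ_addr a 0 0
    rw [add_zero] at this
    exact right_eq_add.mp this
  have hPstar : star P = P := by
    simp only [hPdef, star_sub, star_one, star_mul, star_star]
  have hPT : P * T = 0 := by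
    simp only [hPdef, sub_mul, one_mul, mul_assoc, hTT, mul_one, sub_self]
  have hTP : star T * P = 0 := by
    simp only [hPdef, mul_sub, mul_one, ← mul_assoc, hTT, one_mul, sub_self]
  have hPP : P * P = P := by
    simp only [hPdef, mul_sub, sub_mul, one_mul, mul_one, mul_assoc]
    rw [← mul_assoc (star T), hTT, one_mul]
    abel
  have hsum : P + T * star T = 1 := by simp [hPdef]
  have hsa : IsSelfAdjoint u := by
    have : star u = u := by
      rw [hu, Matrix.star_eq_conjTranspose]
      ext i j
      fin_cases i <;> fin_cases j <;>
        simp [Matrix.conjTranspose_apply, hτ_star, hPstar]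
    exact this
  refine ⟨hsa, ?_⟩
  have e00 : τ P 1 * τ P 1 + τ T (star T) * τ (star T) T = 1 := by
    rw [hτ_mul, hτ_mul, hPP, hTT, one_mul, ← hτ_addl, hsum, hτ_one]
  have e01 : τ P 1 * τ T (star T) + τ T (star T) * τ 1 P = 0 := by
    rw [hτ_mul, hτ_mul, hPT, hTP, hτ0l, hτ0r, add_zero]
  have e10 : τ (star T) T * τ P 1 + τ 1 P * τ (star T) T = 0 := by
    rw [hτ_mul, hτ_mul, hTP, hPT, hτ0l, hτ0r, add_zero]
  have e11 : τ (star T) T * τ T (star T) + τ 1 P * τ 1 P = 1 := by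
    rw [hτ_mul, hτ_mul, hTT, hPP, one_mul, ← hτ_addr]
    rw [show T * star T + P = 1 by rw [← hsum]; abel, hτ_one]
  have hmul : u * u = 1 := by
    rw [hu, Matrix.mul_fin_two, Matrix.one_fin_two, e00, e01, e10, e11]
  exact ⟨by rw [hsa.star_eq, hmul], by rw [hsa.star_eq, hmul]⟩
end

section
/- With notation as before (S the unilateral shift on H = ℓ²(ℕ), P_k, P_k^⊥, e_{kk} the rank-one projection onto ξ_k), the self-adjoint unitary u_k = [[P_k ⊗ 1, S^k ⊗ (S^k)*], [(S^k)* ⊗ S^k, 1 ⊗ P_k]] conjugates the projection diag(e_{kk} ⊗ 1, 0) to diag(0, e_{00} ⊗ P_k^⊥); that is, u_k · diag(e_{kk} ⊗ 1, 0) · u_k = diag(0, e_{00} ⊗ P_k^⊥). -/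
open ContinuousLinearMap in
/-- With `H = ℓ²(ℕ)` (presented by a Hilbert basis `ξ`), `S` the unilateral shift
(`S ξ_n = ξ_{n+1}`), `P_k = 1 - Sᵏ(Sᵏ)*` the projection onto `span{ξ_0,…,ξ_{k-1}}`,
`P_k^⊥ = Sᵏ(Sᵏ)*`, and `e_{ii}` the rank-one projection onto `ξ_i`, the self-adjoint
unitary `u_k = [[P_k ⊗ 1, Sᵏ ⊗ (Sᵏ)*], [(Sᵏ)* ⊗ Sᵏ, 1 ⊗ P_k]]` conjugates
`diag(e_{kk} ⊗ 1, 0)` to `diag(0, e_{00} ⊗ P_k^⊥)`. -/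
theorem uk_conjugates_ekk
    {H : Type*} [NormedAddCommGroup H] [InnerProductSpace ℂ H] [CompleteSpace H]
    (ξ : HilbertBasis ℕ ℂ H) (S : H →L[ℂ] H) (hS : ∀ n, S (ξ n) = ξ (n + 1))
    {B : Type*} [Ring B] [StarRing B]
    (τ : (H →L[ℂ] H) → (H →L[ℂ] H) → B)
    (hτ_one : τ 1 1 = 1)
    (hτ_addl : ∀ a b c, τ (a + b) c = τ a c + τ b c)
    (hτ_addr : ∀ a b c, τ a (b + c) = τ a b + τ a c)
    (hτ_mul : ∀ a b c d, τ a c * τ b d = τ (a * b) (c * d))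
    (hτ_star : ∀ a b, star (τ a b) = τ (star a) (star b))
    (k : ℕ)
    (e : ℕ → (H →L[ℂ] H))
    (he : ∀ i x, e i x = (inner (𝕜 := ℂ) (ξ i) x) • ξ i) :
    letI P : H →L[ℂ] H := 1 - S ^ k * star (S ^ k)
    letI u : Matrix (Fin 2) (Fin 2) B :=
      !![τ P 1, τ (S ^ k) (star (S ^ k));
         τ (star (S ^ k)) (S ^ k), τ 1 P]
    u * !![τ (e k) 1, 0; 0, 0] * u =
      !![0, 0; 0, τ (e 0) (S ^ k * star (S ^ k))] := by
  -- vectors equal if all basis inner products agree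
  have vext : ∀ x y : H, (∀ i, (inner ℂ (ξ i) x : ℂ) = inner ℂ (ξ i) y) → x = y := by
    intro x y h
    apply ξ.repr.injective
    ext i
    simpa [ξ.repr_apply_apply] using h i
  have horth := ξ.orthonormal
  have hinner : ∀ i j, (inner ℂ (ξ i) (ξ j) : ℂ) = if i = j then 1 else 0 :=
    orthonormal_iff_ite.mp horth
  -- adjoint of S on basis vectors
  have hadj : ∀ n, ContinuousLinearMap.adjoint S (ξ (n + 1)) = ξ n := by
    intro n
    apply vext
    intro i
    rw [ContinuousLinearMap.adjoint_inner_right, hS, hinner, hinner]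
    simp
  -- S is an isometry : star S * S = 1
  have hSS : star S * S = 1 := by
    have hdense : Dense (↑(Submodule.span ℂ (Set.range (ξ : ℕ → H))) : Set H) :=
      Submodule.dense_iff_topologicalClosure_eq_top.mpr ξ.dense_span
    apply ContinuousLinearMap.ext_on hdense
    rintro _ ⟨n, rfl⟩
    simp [ContinuousLinearMap.mul_apply, hS, ContinuousLinearMap.star_eq_adjoint, hadj]
  have hTTgen : ∀ m : ℕ, star (S ^ m) * S ^ m = 1 := by
    intro m
    rw [star_pow]
    induction m with
    | zero => simp
    | succ n ih =>
      rw [pow_succ (star S) n, pow_succ' S n, mul_assoc, ← mul_assoc (star S), hSS,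
        one_mul, ih]
  have hTξ0gen : ∀ m : ℕ, (S ^ m) (ξ 0) = ξ m := by
    intro m
    induction m with
    | zero => simp
    | succ n ih => rw [pow_succ', ContinuousLinearMap.mul_apply, ih, hS]
  letI T : H →L[ℂ] H := S ^ k
  letI P : H →L[ℂ] H := 1 - T * star T
  have hTT : star T * T = 1 := hTTgen k
  have hTξ0 : T (ξ 0) = ξ k := hTξ0gen k
  have hT'ξk : star T (ξ k) = ξ 0 := by
    rw [← hTξ0, ← ContinuousLinearMap.mul_apply, hTT, ContinuousLinearMap.one_apply]
  have hPξk : P (ξ k) = 0 := by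
    show (1 - T * star T) (ξ k) = 0
    simp [ContinuousLinearMap.sub_apply, ContinuousLinearMap.mul_apply, hT'ξk, hTξ0]
  have hPstar : star P = P := by
    show star (1 - T * star T) = 1 - T * star T
    simp [star_sub, star_mul]
  -- key operator identities
  have h1 : P * e k = 0 := by
    ext x
    simp [ContinuousLinearMap.mul_apply, he, map_smul, hPξk]
  have h2 : e k * P = 0 := by
    ext x
    have : (inner ℂ (ξ k) (P x) : ℂ) = 0 := by
      rw [← ContinuousLinearMap.star_eq_adjoint] at *
      calc (inner ℂ (ξ k) (P x) : ℂ) = inner ℂ ((ContinuousLinearMap.adjoint P) (ξ k)) x := by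
            rw [ContinuousLinearMap.adjoint_inner_left]
        _ = 0 := by
            rw [← ContinuousLinearMap.star_eq_adjoint, hPstar, hPξk, inner_zero_left]
    simp [ContinuousLinearMap.mul_apply, he, this]
  have h3 : star T * e k * T = e 0 := by
    ext x
    have hin : (inner ℂ (ξ k) (T x) : ℂ) = inner ℂ (ξ 0) x := by
      calc (inner ℂ (ξ k) (T x) : ℂ) = inner ℂ ((ContinuousLinearMap.adjoint T) (ξ k)) x := by
            rw [ContinuousLinearMap.adjoint_inner_left]
        _ = inner ℂ (ξ 0) x := by
            rw [← ContinuousLinearMap.star_eq_adjoint, hT'ξk]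
    simp [ContinuousLinearMap.mul_apply, he, map_smul, hin, hT'ξk]
  -- τ of zero
  have hτ0l : ∀ b, τ 0 b = 0 := by
    intro b
    have h := hτ_addl 0 0 b
    rw [add_zero] at h
    exact (left_eq_add.mp h)
  -- matrix computation
  show (!![τ P 1, τ T (star T); τ (star T) T, τ 1 P] * !![τ (e k) 1, 0; 0, 0]) *
      !![τ P 1, τ T (star T); τ (star T) T, τ 1 P] =
      !![0, 0; 0, τ (e 0) (T * star T)]
  rw [Matrix.mul_fin_two, Matrix.mul_fin_two]
  simp only [mul_zero, zero_mul, add_zero, zero_add, hτ_mul, one_mul, mul_one]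
  rw [show P * e k * P = 0 by rw [h1, zero_mul],
    show P * e k * T = 0 by rw [h1, zero_mul],
    show star T * e k * P = 0 by rw [mul_assoc, h2, mul_zero],
    h3, hτ0l, hτ0l, hτ0l]
end
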